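/- arXiv:2206.14277 — 4 statements merged into one kernel-verified Lean document; each statement's English description precedes it below -/
import Mathlib

section
/- For every i ∈ ℤ and every m ≥ 2, the left-nested iterated commutator equals the right-nested one: [[⋯[[e_i, e_{i+1}], e_{i+2}], ⋯], e_{i+m−1}] = [e_i, [e_{i+1}, ⋯, [e_{i+m−2}, e_{i+m−1}]⋯]] = q_i^m. -/
/-- Commutator `[x, y] = x*y - y*x` in a (not necessarily unital) ring. -/
def cm {A : Type*} [NonUnitalRing A] (x y : A) : A := x * y - y * x

/-- Right-nested iterated commutator `q_i^m = [e_i, [e_{i+1}, ⋯, [e_{i+m-2}, e_{i+m-1}]⋯]]`. -/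
def qq {A : Type*} [NonUnitalRing A] (e : ℤ → A) : ℕ → ℤ → A
  | 0, _ => 0
  | 1, i => e i
  | (m + 2), i => cm (e i) (qq e (m + 1) (i + 1))

/-- Left-nested iterated commutator `[[⋯[[e_i, e_{i+1}], e_{i+2}], ⋯], e_{i+m-1}]`. -/
def lq {A : Type*} [NonUnitalRing A] (e : ℤ → A) : ℕ → ℤ → A
  | 0, _ => 0
  | 1, i => e i
  | (m + 2), i => cm (lq e (m + 1) i) (e (i + (m + 1)))

lemma cm_jacobi {A : Type*} [NonUnitalRing A] (a b c : A) :
    cm (cm a b) c = cm a (cm b c) + cm (cm a c) b := by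
  simp only [cm, mul_sub, sub_mul, mul_assoc]
  abel

lemma cm_zero_left {A : Type*} [NonUnitalRing A] (x : A) : cm 0 x = 0 := by
  simp [cm]

/-- Key lemma: `[q_i^{m+1}, e_{i+m+1}] = q_i^{m+2}`, using only the
commutation of far-apart generators. -/
lemma qq_step {A : Type*} [NonUnitalRing A] (e : ℤ → A)
    (h4 : ∀ i j : ℤ, |i - j| > 1 → e i * e j = e j * e i) :
    ∀ (m : ℕ) (i : ℤ), cm (qq e (m + 1) i) (e (i + (m + 1))) = qq e (m + 2) i := by
  intro m
  induction m with
  | zero => intro i; simp [qq]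
  | succ n ih =>
    intro i
    have hcomm : cm (e i) (e (i + (n + 1 + 1))) = 0 := by
      have : e i * e (i + (n + 1 + 1)) = e (i + (n + 1 + 1)) * e i := by
        apply h4
        have h5 : i - (i + ((n : ℤ) + 1 + 1)) = -((n : ℤ) + 2) := by ring
        rw [h5, abs_neg, abs_of_nonneg (by positivity)]
        linarith [Int.ofNat_nonneg n]
      simp [cm, this]
    have key : qq e (n + 1 + 2) i = cm (e i) (qq e (n + 2) (i + 1)) := by
      rfl
    rw [show qq e (n + 1 + 1) i = cm (e i) (qq e (n + 1) (i + 1)) from rfl]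
    rw [cm_jacobi]
    push_cast
    rw [hcomm, cm_zero_left, add_zero]
    have := ih (i + 1)
    rw [show (i + 1 + ((n : ℤ) + 1)) = i + ((n : ℤ) + 1 + 1) by ring] at this
    rw [this, key]

theorem stmt_2 {A : Type*} [NonUnitalRing A] (e : ℤ → A)
    (h1 : ∀ i : ℤ, e i * e i = 0)
    (h2 : ∀ i : ℤ, e i * e (i + 1) * e i = e i)
    (h3 : ∀ i : ℤ, e (i + 1) * e i * e (i + 1) = e (i + 1))
    (h4 : ∀ i j : ℤ, |i - j| > 1 → e i * e j = e j * e i) :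
    ∀ (i : ℤ) (m : ℕ), 2 ≤ m → lq e m i = qq e m i := by
  intro i m
  induction m with
  | zero => omega
  | succ n ih =>
    intro hn
    match n, ih with
    | 1, _ => simp [lq, qq]
    | (k + 2), ih =>
      have h := ih (by omega)
      rw [show lq e (k + 2 + 1) i = cm (lq e (k + 2) i) (e (i + ((k : ℤ) + 2))) from rfl]
      rw [h]
      have h6 := qq_step e h4 (k + 1) i
      push_cast at h6 ⊢
      rw [show ((k : ℤ) + 1 + 1) = (k : ℤ) + 2 by ring] at h6
      exact h6
end

section
/- For all i, j ∈ ℤ the following commutators hold (δ denotes the Kronecker delta): [e_j, q_i^1] = δ_{j,i−1}·q_{i−1}^2 − δ_{j,i+1}·q_i^2; [e_j, q_i^2] = δ_{j,i−1}·q_{i−1}^3 − 2·δ_{j,i}·q_i^1 + 2·δ_{j,i+1}·q_{i+1}^1 − δ_{j,i+2}·q_i^3; and [e_j, q_i^3] = δ_{j,i−1}·q_{i−1}^4 + δ_{j,i+1}·(q_{i+1}^2 − q_i^2) − δ_{j,i+3}·q_i^4. -/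
section Lemmas
variable {A : Type*} [NonUnitalRing A] {a b c d x y : A}

theorem cm_skew (x y : A) : cm x y = -(cm y x) := by simp [cm]

theorem cm_self (x : A) : cm x x = 0 := sub_self _

theorem cm_zero_of_comm (h : x * y = y * x) : cm x y = 0 := by simp [cm, h]

theorem comm_cm (hxa : x * a = a * x) (hxb : x * b = b * x) :
    x * cm a b = cm a b * x := by
  simp only [cm, mul_sub, sub_mul, ← mul_assoc, hxa, hxb]
  rw [mul_assoc a, hxb, mul_assoc b, hxa, ← mul_assoc, ← mul_assoc]

theorem cm_neg (x y : A) : cm x (-y) = -(cm x y) := by simp [cm]; abel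

theorem cm_smul (n : ℤ) (x y : A) : cm x (n • y) = n • cm x y := by
  simp [cm, mul_smul_comm, smul_mul_assoc, smul_sub]

theorem K2 (haa : a * a = 0) (haba : a * b * a = a) :
    cm a (cm a b) = -((2 : ℤ) • a) := by
  simp only [cm, mul_sub, sub_mul, ← mul_assoc, haa, haba, zero_mul, mul_zero]
  rw [mul_assoc b, haa, mul_zero]; abel

theorem K2' (hbb : b * b = 0) (hbab : b * a * b = b) :
    cm b (cm a b) = (2 : ℤ) • b := by
  simp only [cm, mul_sub, sub_mul, ← mul_assoc, hbb, hbab, zero_mul, mul_zero]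
  rw [mul_assoc a, hbb, mul_zero]; abel

theorem K3 (hac : a * c = c * a) : cm c (cm a b) = -(cm a (cm b c)) := by
  simp only [cm, mul_sub, sub_mul, ← mul_assoc]
  rw [← hac, mul_assoc b, hac, ← mul_assoc]; abel

theorem Kswap (had : d * a = a * d) : cm d (cm a x) = cm a (cm d x) := by
  simp only [cm, mul_sub, sub_mul, ← mul_assoc, had]
  rw [show x * a * d = x * d * a by rw [mul_assoc, ← had, ← mul_assoc]]; abel

theorem K4 (haa : a * a = 0) (haba : a * b * a = a) (hac : a * c = c * a) :
    cm a (cm a (cm b c)) = 0 := by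
  simp only [cm, mul_sub, sub_mul, ← mul_assoc, haa, haba, zero_mul, mul_zero]
  rw [show a * b * c * a = a * c by rw [mul_assoc (a*b), ← hac, ← mul_assoc, haba],
    show a * c * b * a = a * c by rw [hac, mul_assoc c a b, mul_assoc c, haba, ← hac],
    mul_assoc (b*c), haa, mul_zero, mul_assoc (c*b), haa, mul_zero]
  abel

theorem K31 (hbb : b * b = 0) (hbab : b * a * b = b) (hbcb : b * c * b = b)
    (hac : a * c = c * a) :
    cm b (cm a (cm b c)) = cm b c - cm a b := by
  simp only [cm, mul_sub, sub_mul, ← mul_assoc, hbb, hbab, hbcb, zero_mul, mul_zero]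
  rw [show b * a * c * b = b * c * a * b by rw [mul_assoc b a c, hac, ← mul_assoc],
    show a * b * c * b = a * b by rw [mul_assoc a b c, mul_assoc a, hbcb],
    show c * b * a * b = c * b by rw [mul_assoc c b a, mul_assoc c, hbab],
    mul_assoc (a*c), hbb, mul_zero]
  abel

theorem K5 (hcc : c * c = 0) (hcbc : c * b * c = c) (hac : a * c = c * a) :
    cm c (cm a (cm b c)) = 0 := by
  rw [Kswap hac.symm, cm_skew b c, cm_neg, K2 hcc hcbc, neg_neg, cm_smul,
    cm_zero_of_comm hac, smul_zero]

theorem K6 (hda : d * a = a * d) (hdb : d * b = b * d) :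
    cm d (cm a (cm b c)) = -(cm a (cm b (cm c d))) := by
  rw [Kswap hda, K3 hdb.symm, cm_neg]

end Lemmas

theorem stmt_3 {A : Type*} [NonUnitalRing A] (e : ℤ → A)
    (h1 : ∀ i : ℤ, e i * e i = 0)
    (h2 : ∀ i : ℤ, e i * e (i + 1) * e i = e i)
    (h3 : ∀ i : ℤ, e (i + 1) * e i * e (i + 1) = e (i + 1))
    (h4 : ∀ i j : ℤ, |i - j| > 1 → e i * e j = e j * e i) :
    ∀ i j : ℤ,
      cm (e j) (qq e 1 i) =
        (if j = i - 1 then qq e 2 (i - 1) else 0) - (if j = i + 1 then qq e 2 i else 0) ∧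
      cm (e j) (qq e 2 i) =
        (if j = i - 1 then qq e 3 (i - 1) else 0) - (if j = i then (2 : ℤ) • qq e 1 i else 0)
          + (if j = i + 1 then (2 : ℤ) • qq e 1 (i + 1) else 0)
          - (if j = i + 2 then qq e 3 i else 0) ∧
      cm (e j) (qq e 3 i) =
        (if j = i - 1 then qq e 4 (i - 1) else 0)
          + (if j = i + 1 then qq e 2 (i + 1) - qq e 2 i else 0)
          - (if j = i + 3 then qq e 4 i else 0) := by
  have far : ∀ k j : ℤ, j ≠ k - 1 → j ≠ k → j ≠ k + 1 → e j * e k = e k * e j := by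
    intro k j hj1 hj2 hj3
    exact h4 j k (by rw [gt_iff_lt, lt_abs]; omega)
  have q1 : ∀ k : ℤ, qq e 1 k = e k := fun _ => rfl
  have q2 : ∀ k : ℤ, qq e 2 k = cm (e k) (e (k + 1)) := fun _ => rfl
  have q3 : ∀ k : ℤ, qq e 3 k = cm (e k) (cm (e (k + 1)) (e (k + 2))) := by
    intro k
    show cm (e k) (cm (e (k + 1)) (e (k + 1 + 1))) = _
    rw [show k + 1 + 1 = k + 2 by ring]
  have q4 : ∀ k : ℤ, qq e 4 k = cm (e k) (cm (e (k + 1)) (cm (e (k + 2)) (e (k + 3)))) := by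
    intro k
    show cm (e k) (qq e 3 (k + 1)) = _
    rw [q3, show k + 1 + 1 = k + 2 by ring, show k + 1 + 2 = k + 3 by ring]
  have h2' : ∀ k : ℤ, e k * e (k + 1) * e k = e k := h2
  have h3' : ∀ k : ℤ, e (k + 1) * e k * e (k + 1) = e (k + 1) := h3
  intro i j
  refine ⟨?_, ?_, ?_⟩
  · -- part 1
    rcases eq_or_ne j (i - 1) with rfl | hj1
    · rw [if_pos rfl, if_neg (by omega), sub_zero, q2, q1,
        show i - 1 + 1 = i by ring]
    rcases eq_or_ne j (i + 1) with rfl | hj2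
    · rw [if_neg hj1, if_pos rfl, zero_sub, q2, q1]
      exact cm_skew _ _
    rcases eq_or_ne j i with h | hj0
    · rw [h, if_neg (by omega : i ≠ i - 1), if_neg (by omega : i ≠ i + 1), sub_zero, q1]
      exact cm_self _
    · rw [if_neg hj1, if_neg hj2, sub_zero, q1]
      exact cm_zero_of_comm (far i j hj1 hj0 hj2)
  · -- part 2
    rcases eq_or_ne j (i - 1) with rfl | hj1
    · rw [if_pos rfl, if_neg (by omega), if_neg (by omega), if_neg (by omega),
        sub_zero, add_zero, sub_zero, q3, show i - 1 + 1 = i by ring,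
        show i - 1 + 2 = i + 1 by ring, ← q2]
    rcases eq_or_ne j i with h | hj0
    · rw [h, if_neg (by omega : i ≠ i - 1), if_pos rfl,
        if_neg (by omega : i ≠ i + 1), if_neg (by omega : i ≠ i + 2),
        sub_zero, add_zero, zero_sub, q2, q1]
      exact K2 (h1 i) (h2' i)
    rcases eq_or_ne j (i + 1) with rfl | hj2
    · rw [if_neg hj1, if_neg hj0, if_pos rfl, if_neg (by omega),
        sub_zero, sub_zero, zero_add, q2, q1]
      exact K2' (h1 (i + 1)) (h3' i)
    rcases eq_or_ne j (i + 2) with rfl | hj3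
    · rw [if_neg hj1, if_neg hj0, if_neg hj2, if_pos rfl,
        sub_zero, add_zero, zero_sub, q2, q3]
      exact K3 (far (i + 2) i (by omega) (by omega) (by omega))
    · rw [if_neg hj1, if_neg hj0, if_neg hj2, if_neg hj3,
        sub_zero, sub_zero, add_zero, q2]
      exact cm_zero_of_comm (comm_cm (far i j hj1 hj0 hj2)
        (far (i + 1) j (by omega) hj2 (by omega)))
  · -- part 3
    rcases eq_or_ne j (i - 1) with rfl | hj1
    · rw [if_pos rfl, if_neg (by omega), if_neg (by omega), add_zero, sub_zero, q4,
        show i - 1 + 1 = i by ring, show i - 1 + 2 = i + 1 by ring,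
        show i - 1 + 3 = i + 2 by ring, ← q3]
    rcases eq_or_ne j i with h | hj0
    · rw [h, if_neg (by omega : i ≠ i - 1), if_neg (by omega : i ≠ i + 1),
        if_neg (by omega : i ≠ i + 3), add_zero, sub_zero, q3]
      exact K4 (h1 i) (h2' i) (far (i + 2) i (by omega) (by omega) (by omega))
    rcases eq_or_ne j (i + 1) with rfl | hj2
    · rw [if_neg hj1, if_pos rfl, if_neg (by omega), zero_add, sub_zero, q3, q2, q2,
        show i + 1 + 1 = i + 2 by ring]
      have hbcb : e (i + 1) * e (i + 2) * e (i + 1) = e (i + 1) := by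
        have := h2' (i + 1); rwa [show i + 1 + 1 = i + 2 by ring] at this
      exact K31 (h1 (i + 1)) (h3' i) hbcb (far (i + 2) i (by omega) (by omega) (by omega))
    rcases eq_or_ne j (i + 2) with rfl | hj3
    · rw [if_neg hj1, if_neg hj2, if_neg (by omega), add_zero, sub_zero, q3]
      have hcbc : e (i + 2) * e (i + 1) * e (i + 2) = e (i + 2) := by
        have := h3' (i + 1); rwa [show i + 1 + 1 = i + 2 by ring] at this
      exact K5 (h1 (i + 2)) hcbc (far (i + 2) i (by omega) (by omega) (by omega))
    rcases eq_or_ne j (i + 3) with rfl | hj4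
    · rw [if_neg hj1, if_neg hj2, if_pos rfl, add_zero, zero_sub, q3, q4]
      exact K6 (far i (i + 3) (by omega) (by omega) (by omega))
        (far (i + 1) (i + 3) (by omega) (by omega) (by omega))
    · rw [if_neg hj1, if_neg hj2, if_neg hj4, add_zero, sub_zero, q3]
      exact cm_zero_of_comm (comm_cm (far i j hj1 hj0 hj2)
        (comm_cm (far (i + 1) j (by omega) hj2 (by omega)) (far (i + 2) j (by omega) hj3 (by omega))))
end

section
/- For the 2×2 real matrices E = [[0,1],[0,0]], F = [[0,0],[1,0]], H = [[1,0],[0,−1]] and every z ∈ ℝ, the Baker–Campbell–Hausdorff product has the closed form exp(z·E)·exp(z·F) = exp(φ(z)·(E + F + (z/2)·H)), where φ(z) = 4·arcsinh(z/2)/√(4 + z²) and exp denotes the matrix exponential. -/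
/-!
Both factors on the left are unipotent, `exp (z • E) = 1 + z • E` and `exp (z • F) = 1 + z • F`,
so the left side is `!![1 + z², z; z, 1]`. On the right, `X = E + F + (z / 2) • H` satisfies
`X² = r² • 1` with `r = √(4 + z²) / 2`, so splitting the exponential series into even and odd
terms gives `exp (t • X) = cosh (t r) • 1 + (sinh (t r) / r) • X`. For `t = φ(z)` the angle is
`t r = 2 arsinh (z / 2)`, whose hyperbolic cosine is `1 + z² / 2` and whose hyperbolic sine is `z r`.
-/

open NormedSpace Real

section

variable {A : Type*} [Ring A] [Algebra ℝ A] [TopologicalSpace A] [IsTopologicalRing A]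

theorem exp_eq_one_add_of_mul_self_eq_zero {X : A} (hX : X * X = 0) : exp X = 1 + X := by
  have hpow : ∀ n, X ^ (n + 2) = 0 := fun n => by rw [pow_add, sq, hX, mul_zero]
  rw [congrFun (exp_eq_tsum ℝ) X, tsum_eq_sum (s := {0, 1})]
  · simp
  · rintro (_ | _ | n) hn
    · simp at hn
    · simp at hn
    · rw [hpow, smul_zero]

variable [T2Space A] [ContinuousSMul ℝ A]

theorem exp_smul_eq_cosh_add_sinh_of_mul_self_eq {Y : A} {r : ℝ} (hr : r ≠ 0)
    (hY : Y * Y = r ^ 2 • (1 : A)) (t : ℝ) :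
    exp (t • Y) = cosh (t * r) • (1 : A) + (sinh (t * r) / r) • Y := by
  have hpow : ∀ n, Y ^ (2 * n) = r ^ (2 * n) • (1 : A) := fun n => by
    rw [pow_mul, sq, hY, smul_pow, one_pow, pow_mul]
  rw [exp_eq_tsum ℝ]
  refine HasSum.tsum_eq (HasSum.even_add_odd ?_ ?_)
  · convert (hasSum_cosh (t * r)).smul_const (1 : A) using 2 with n
    rw [smul_pow, hpow, smul_smul, smul_smul, mul_pow, div_eq_inv_mul]
    ring_nf
  · convert ((hasSum_sinh (t * r)).div_const r).smul_const Y using 2 with n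
    rw [smul_pow, pow_succ Y, hpow, smul_mul_assoc, one_mul, smul_smul, smul_smul]
    congr 1
    field_simp
    ring

end

theorem cosh_two_mul_arsinh (x : ℝ) : cosh (2 * arsinh x) = 1 + 2 * x ^ 2 := by
  rw [cosh_two_mul, cosh_arsinh, sinh_arsinh, sq_sqrt (by positivity)]
  ring

theorem sinh_two_mul_arsinh (x : ℝ) : sinh (2 * arsinh x) = 2 * x * √(1 + x ^ 2) := by
  rw [sinh_two_mul, cosh_arsinh, sinh_arsinh]

theorem stmt_16 (z : ℝ)
    (E F H : Matrix (Fin 2) (Fin 2) ℝ)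
    (hE : E = !![0, 1; 0, 0]) (hF : F = !![0, 0; 1, 0]) (hH : H = !![1, 0; 0, -1]) :
    NormedSpace.exp (z • E) * NormedSpace.exp (z • F) =
      NormedSpace.exp
        ((4 * Real.arsinh (z / 2) / Real.sqrt (4 + z ^ 2)) • (E + F + (z / 2) • H)) := by
  set w := √(4 + z ^ 2)
  have hw : w ^ 2 = 4 + z ^ 2 := sq_sqrt (by positivity)
  have hw0 : w ≠ 0 := (sqrt_pos.2 (by positivity)).ne'
  have hE2 : (z • E) * (z • E) = 0 := by
    subst hE; ext i j; fin_cases i <;> fin_cases j <;> simp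
  have hF2 : (z • F) * (z • F) = 0 := by
    subst hF; ext i j; fin_cases i <;> fin_cases j <;> simp
  have hX : (E + F + (z / 2) • H) * (E + F + (z / 2) • H) = (w / 2) ^ 2 • (1 : Matrix _ _ ℝ) := by
    subst hE hF hH
    simp [Matrix.one_fin_two, div_pow, hw]
    constructor <;> ring
  have hangle : 4 * arsinh (z / 2) / w * (w / 2) = 2 * arsinh (z / 2) := by
    field_simp
    ring
  have hsqrt : √(1 + (z / 2) ^ 2) = w / 2 := by
    rw [sqrt_eq_iff_mul_self_eq_of_pos (by positivity)]
    linear_combination hw / 4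
  rw [exp_eq_one_add_of_mul_self_eq_zero hE2, exp_eq_one_add_of_mul_self_eq_zero hF2,
    exp_smul_eq_cosh_add_sinh_of_mul_self_eq (div_ne_zero hw0 two_ne_zero) hX, hangle,
    cosh_two_mul_arsinh, sinh_two_mul_arsinh, hsqrt, Matrix.one_fin_two]
  subst hE hF hH
  ext i j; fin_cases i <;> fin_cases j <;> simp <;> field_simp <;> ring
end

section
/- For every real z with |z| < 2, the series Σ_{s=0}^{∞} (−1)^s · z^{2s+1} / ((2s+1) · C(2s, s)) converges to 4·arcsinh(z/2)/√(4 + z²); that is, the function z ↦ 4·arcsinh(z/2)/√(4 + z²) has the power-series representation with coefficients (−1)^s/((2s+1)·C(2s,s)) at the odd powers z^{2s+1}. -/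
/-! With `g x = ∑ aₛ x^(2s+1)`, the recurrence `4 (2s+3) aₛ₊₁ = -(2s+2) aₛ` for the coefficients makes
the termwise series of `(4 + x²) g' + x g` telescope to `4`. Hence `g x · √(4 + x²) - 4 arsinh (x/2)`
has derivative zero on `(-2, 2)` and vanishes at `0`. The bound `4^s ≤ (2s+1) C(2s, s)` gives
convergence of both series for `|x| < 2`. -/

open Real Set

noncomputable def arsinhCoeff (s : ℕ) : ℝ :=
  (-1) ^ s / ((2 * s + 1) * ((2 * s).choose s : ℝ))

lemma abs_arsinhCoeff_le (s : ℕ) : |arsinhCoeff s| ≤ (1 / 4) ^ s := by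
  have h4 : (4 : ℝ) ^ s ≤ (2 * s + 1) * ((2 * s).choose s : ℝ) := by
    exact_mod_cast Nat.four_pow_le_two_mul_add_one_mul_central_binom s
  rw [arsinhCoeff, abs_div, abs_pow, abs_neg, abs_one, one_pow,
    abs_of_pos (lt_of_lt_of_le (by positivity) h4), div_pow, one_pow]
  exact one_div_le_one_div_of_le (by positivity) h4

lemma arsinhCoeff_succ (s : ℕ) :
    4 * (2 * s + 3) * arsinhCoeff (s + 1) = -((2 * s + 2) * arsinhCoeff s) := by
  have hrec : ((s : ℝ) + 1) * ((2 * (s + 1)).choose (s + 1) : ℝ)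
      = 2 * (2 * s + 1) * ((2 * s).choose s : ℝ) := by
    exact_mod_cast Nat.succ_mul_centralBinom_succ s
  have h₀ : ((2 * s).choose s : ℝ) ≠ 0 := by exact_mod_cast (Nat.centralBinom_pos s).ne'
  have h₁ : ((2 * (s + 1)).choose (s + 1) : ℝ) ≠ 0 := by
    exact_mod_cast (Nat.centralBinom_pos (s + 1)).ne'
  rw [arsinhCoeff, arsinhCoeff]
  push_cast
  field_simp
  linear_combination (2 * (2 * (s : ℝ) + 3) * (-1) ^ s) * hrec

lemma summable_two_mul_add_one_mul_geometric {q : ℝ} (hq : ‖q‖ < 1) :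
    Summable fun s : ℕ => (2 * s + 1) * q ^ s := by
  have h₁ := summable_pow_mul_geometric_of_norm_lt_one 1 hq
  exact ((h₁.mul_left 2).add (summable_geometric_of_norm_lt_one hq)).congr fun s => by ring

lemma norm_sq_div_four_lt_one {x : ℝ} (hx : |x| < 2) : ‖x ^ 2 / 4‖ < 1 := by
  rw [Real.norm_eq_abs, abs_of_nonneg (by positivity)]
  nlinarith [abs_nonneg x, sq_abs x]

lemma norm_arsinhCoeff_term_le (s : ℕ) (x : ℝ) :
    ‖arsinhCoeff s * x ^ (2 * s + 1)‖ ≤ |x| * (x ^ 2 / 4) ^ s := by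
  rw [Real.norm_eq_abs, abs_mul, abs_pow, pow_succ, pow_mul, sq_abs, div_pow, div_eq_mul_inv,
    ← inv_pow, ← one_div]
  calc |arsinhCoeff s| * ((x ^ 2) ^ s * |x|) ≤ (1 / 4) ^ s * ((x ^ 2) ^ s * |x|) := by
        gcongr; exact abs_arsinhCoeff_le s
    _ = |x| * ((x ^ 2) ^ s * (1 / 4) ^ s) := by ring

lemma norm_arsinhCoeff_deriv_term_le (s : ℕ) {y r : ℝ} (hy : |y| ≤ r) :
    ‖(2 * s + 1) * arsinhCoeff s * y ^ (2 * s)‖ ≤ (2 * s + 1) * (r ^ 2 / 4) ^ s := by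
  rw [Real.norm_eq_abs, abs_mul, abs_mul, abs_pow, abs_of_pos (by positivity)]
  calc (2 * s + 1) * |arsinhCoeff s| * |y| ^ (2 * s)
      ≤ (2 * s + 1) * (1 / 4) ^ s * r ^ (2 * s) := by
        gcongr
        exact abs_arsinhCoeff_le s
    _ = (2 * s + 1) * (r ^ 2 / 4) ^ s := by rw [div_pow, div_pow, one_pow, pow_mul]; ring

noncomputable def arsinhSeries (x : ℝ) : ℝ := ∑' s, arsinhCoeff s * x ^ (2 * s + 1)

noncomputable def arsinhSeriesDeriv (x : ℝ) : ℝ := ∑' s, (2 * s + 1) * arsinhCoeff s * x ^ (2 * s)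

lemma hasSum_arsinhSeries {x : ℝ} (hx : |x| < 2) :
    HasSum (fun s => arsinhCoeff s * x ^ (2 * s + 1)) (arsinhSeries x) :=
  (Summable.of_norm_bounded
    ((summable_geometric_of_norm_lt_one (norm_sq_div_four_lt_one hx)).mul_left |x|)
    (norm_arsinhCoeff_term_le · x)).hasSum

lemma hasSum_arsinhSeriesDeriv {x : ℝ} (hx : |x| < 2) :
    HasSum (fun s => (2 * s + 1) * arsinhCoeff s * x ^ (2 * s)) (arsinhSeriesDeriv x) :=
  (Summable.of_norm_bounded
    (summable_two_mul_add_one_mul_geometric (q := |x| ^ 2 / 4)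
      (by rw [sq_abs]; exact norm_sq_div_four_lt_one hx))
    (fun s => norm_arsinhCoeff_deriv_term_le s le_rfl)).hasSum

lemma hasDerivAt_arsinhSeries {x : ℝ} (hx : |x| < 2) :
    HasDerivAt arsinhSeries (arsinhSeriesDeriv x) x := by
  obtain ⟨r, hxr, hr2⟩ := exists_between hx
  have hr : 0 < r := (abs_nonneg x).trans_lt hxr
  refine hasDerivAt_tsum_of_isPreconnected (t := Ioo (-r) r)
    (g := fun s y => arsinhCoeff s * y ^ (2 * s + 1))
    (summable_two_mul_add_one_mul_geometric (norm_sq_div_four_lt_one (by rwa [abs_of_pos hr])))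
    isOpen_Ioo isPreconnected_Ioo (fun s y _ => ?_)
    (fun s y hy => norm_arsinhCoeff_deriv_term_le s (abs_le.2 ⟨hy.1.le, hy.2.le⟩))
    (show (0 : ℝ) ∈ Ioo (-r) r from ⟨neg_lt_zero.2 hr, hr⟩)
    (hasSum_arsinhSeries (by norm_num)).summable (abs_lt.1 hxr)
  refine ((hasDerivAt_pow (2 * s + 1) y).const_mul (arsinhCoeff s)).congr_deriv ?_
  rw [Nat.add_sub_cancel]
  push_cast
  ring

lemma four_add_sq_mul_arsinhSeriesDeriv_add {x : ℝ} (hx : |x| < 2) :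
    (4 + x ^ 2) * arsinhSeriesDeriv x + x * arsinhSeries x = 4 := by
  set F : ℕ → ℝ := fun s => 4 * ((2 * s + 1) * arsinhCoeff s * x ^ (2 * s))
  have hF : HasSum F (4 * arsinhSeriesDeriv x) := (hasSum_arsinhSeriesDeriv hx).mul_left 4
  have hF0 : F 0 = 4 := by simp [F, arsinhCoeff]
  have htelescope : HasSum (fun s => F s - F (s + 1)) 4 := by
    simpa [hF0] using hF.sub ((hasSum_nat_add_iff' 1).2 hF)
  refine (((hasSum_arsinhSeriesDeriv hx).mul_left (4 + x ^ 2)).add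
    ((hasSum_arsinhSeries hx).mul_left x)).unique (htelescope.congr_fun fun s => ?_)
  simp only [F]
  push_cast
  linear_combination (x ^ (2 * s) * x ^ 2) * arsinhCoeff_succ s

lemma hasDerivAt_arsinhSeries_mul_sqrt_sub {x : ℝ} (hx : |x| < 2) :
    HasDerivAt (fun y => arsinhSeries y * √(4 + y ^ 2) - 4 * arsinh (y / 2)) 0 x := by
  have h4 : 0 < 4 + x ^ 2 := by positivity
  have hsqrt : HasDerivAt (fun y => √(4 + y ^ 2)) (x / √(4 + x ^ 2)) x := by
    refine (((hasDerivAt_pow 2 x).const_add 4).sqrt h4.ne').congr_deriv ?_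
    field_simp
    norm_num
  have harsinh : HasDerivAt (fun y => 4 * arsinh (y / 2)) (4 / √(4 + x ^ 2)) x := by
    refine (((hasDerivAt_id x).div_const 2).arsinh.const_mul 4).congr_deriv ?_
    have : √(1 + (x / 2) ^ 2) = √(4 + x ^ 2) / 2 := by
      rw [show 1 + (x / 2) ^ 2 = (4 + x ^ 2) / 2 ^ 2 by ring, Real.sqrt_div' _ (by positivity),
        Real.sqrt_sq zero_le_two]
    rw [id, smul_eq_mul, this]
    field_simp
  refine (((hasDerivAt_arsinhSeries hx).mul hsqrt).sub harsinh).congr_deriv ?_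
  field_simp
  linear_combination four_add_sq_mul_arsinhSeriesDeriv_add hx +
    arsinhSeriesDeriv x * Real.sq_sqrt h4.le

lemma arsinhSeries_mul_sqrt {x : ℝ} (hx : |x| < 2) :
    arsinhSeries x * √(4 + x ^ 2) = 4 * arsinh (x / 2) := by
  have hderiv (y) (hy : y ∈ Ioo (-2 : ℝ) 2) :=
    hasDerivAt_arsinhSeries_mul_sqrt_sub (abs_lt.2 hy)
  have hconst := isOpen_Ioo.is_const_of_deriv_eq_zero isPreconnected_Ioo
    (fun y hy => (hderiv y hy).differentiableAt.differentiableWithinAt)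
    (fun y hy => (hderiv y hy).deriv) (abs_lt.1 hx) (show (0 : ℝ) ∈ Ioo (-2) 2 by norm_num)
  simpa [arsinhSeries, sub_eq_zero] using hconst

theorem stmt_17 (z : ℝ) (hz : |z| < 2) :
    HasSum
      (fun s : ℕ =>
        (-1 : ℝ) ^ s * z ^ (2 * s + 1) / ((2 * s + 1) * (Nat.choose (2 * s) s : ℝ)))
      (4 * Real.arsinh (z / 2) / Real.sqrt (4 + z ^ 2)) := by
  have hsqrt_pos : 0 < √(4 + z ^ 2) := Real.sqrt_pos.2 (by positivity)
  rw [← arsinhSeries_mul_sqrt hz, mul_div_cancel_right₀ _ hsqrt_pos.ne']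
  convert hasSum_arsinhSeries hz using 2 with s
  rw [arsinhCoeff]
  ring
end
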